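/- arXiv:2306.01585 — 2 statements merged into one kernel-verified Lean document; each statement's English description precedes it below -/
import Mathlib

section
/- Let n ≥ 1 and let u, v, w ∈ ℤ^n be pairwise orthogonal vectors with ⟨u, u⟩ = ⟨v, v⟩ = ⟨w, w⟩ = 2. If the supports of u and v intersect, then the support of w is disjoint from the support of u and from the support of v. -/
lemma norm_two_struct (n : ℕ) (x : Fin n → ℤ) (hx : ∑ m, x m * x m = 2) :
    (∀ m, x m = 0 ∨ x m = 1 ∨ x m = -1) ∧
    ∃ i j : Fin n, i ≠ j ∧ x i ≠ 0 ∧ x j ≠ 0 ∧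
      ∀ k, k ≠ i → k ≠ j → x k = 0 := by
  have hval : ∀ m, x m = 0 ∨ x m = 1 ∨ x m = -1 := by
    intro m
    have h1 : x m * x m ≤ 2 := by
      have h := Finset.single_le_sum (f := fun m => x m * x m)
        (fun i _ => mul_self_nonneg (x i)) (Finset.mem_univ m)
      omega
    have h2 : 2 * x m ≤ 3 := by nlinarith [sq_nonneg (x m - 1)]
    have h3 : -3 ≤ 2 * x m := by nlinarith [sq_nonneg (x m + 1)]
    omega
  refine ⟨hval, ?_⟩
  set s := Finset.univ.filter (fun m => x m ≠ 0) with hs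
  have hsum : ∑ m, x m * x m = ∑ m ∈ s, x m * x m := by
    refine (Finset.sum_subset (Finset.subset_univ _) ?_).symm
    intro k _ hk
    simp only [hs, Finset.mem_filter, Finset.mem_univ, true_and, not_not] at hk
    rw [hk, mul_zero]
  have hone : ∀ m ∈ s, x m * x m = 1 := by
    intro m hm
    simp only [hs, Finset.mem_filter, Finset.mem_univ, true_and] at hm
    rcases hval m with h | h | h
    · exact absurd h hm
    · rw [h]; ring
    · rw [h]; ring
  have hcard : (s.card : ℤ) = 2 := by
    rw [← hx, hsum, Finset.sum_congr rfl hone]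
    simp
  have hcard2 : s.card = 2 := by exact_mod_cast hcard
  obtain ⟨i, j, hij, hset⟩ := Finset.card_eq_two.mp hcard2
  have hi : x i ≠ 0 := by
    have : i ∈ s := by rw [hset]; simp
    simpa [hs] using this
  have hj : x j ≠ 0 := by
    have : j ∈ s := by rw [hset]; simp
    simpa [hs] using this
  refine ⟨i, j, hij, hi, hj, fun k hki hkj => ?_⟩
  by_contra hk
  have : k ∈ s := by simp [hs, hk]
  rw [hset] at this
  simp only [Finset.mem_insert, Finset.mem_singleton] at this
  tauto

lemma dot_eq (n : ℕ) (x y : Fin n → ℤ) (i j : Fin n) (hij : i ≠ j)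
    (hz : ∀ k, k ≠ i → k ≠ j → x k = 0) :
    ∑ m, x m * y m = x i * y i + x j * y j := by
  rw [← Finset.sum_pair (f := fun m => x m * y m) hij]
  refine (Finset.sum_subset (Finset.subset_univ _) ?_).symm
  intro k _ hk
  simp only [Finset.mem_insert, Finset.mem_singleton] at hk
  push_neg at hk
  rw [hz k hk.1 hk.2, zero_mul]

/-- Proposition on lattice embedding facts, part (4): if `u, v, w` are pairwise
orthogonal vectors of square 2 in `ℤ^n` and the supports of `u` and `v`
intersect, then the support of `w` is disjoint from both. -/
theorem stmt_3 (n : ℕ) (hn : 1 ≤ n) (u v w : Fin n → ℤ)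
    (hu : ∑ m, u m * u m = 2) (hv : ∑ m, v m * v m = 2) (hw : ∑ m, w m * w m = 2)
    (huv : ∑ m, u m * v m = 0) (huw : ∑ m, u m * w m = 0)
    (hvw : ∑ m, v m * w m = 0)
    (hmeet : (Function.support u ∩ Function.support v).Nonempty) :
    Disjoint (Function.support w) (Function.support u) ∧
      Disjoint (Function.support w) (Function.support v) := by
  obtain ⟨huval, i, j, hij, hui, huj, huz⟩ := norm_two_struct n u hu
  obtain ⟨hvval, _⟩ := norm_two_struct n v hv
  obtain ⟨hwval, _⟩ := norm_two_struct n w hw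
  -- reduce dot products
  have e1 : u i * v i + u j * v j = 0 := by rw [← dot_eq n u v i j hij huz]; exact huv
  have e2 : u i * w i + u j * w j = 0 := by rw [← dot_eq n u w i j hij huz]; exact huw
  -- support of v equals {i, j}
  obtain ⟨a, ha⟩ := hmeet
  simp only [Set.mem_inter_iff, Function.mem_support] at ha
  have hai : a = i ∨ a = j := by
    by_contra h
    push_neg at h
    exact ha.1 (huz a h.1 h.2)
  have hvi : v i ≠ 0 ∧ v j ≠ 0 := by
    constructor
    · intro h
      rw [h, mul_zero, zero_add] at e1
      rcases mul_eq_zero.mp e1 with h' | h'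
      · exact huj h'
      · rcases hai with rfl | rfl
        · exact ha.2 h
        · exact ha.2 h'
    · intro h
      rw [h, mul_zero, add_zero] at e1
      rcases mul_eq_zero.mp e1 with h' | h'
      · exact hui h'
      · rcases hai with rfl | rfl
        · exact ha.2 h'
        · exact ha.2 h
  -- v vanishes outside {i, j}
  obtain ⟨hvval2, k, l, hkl, hvk, hvl, hvz⟩ := norm_two_struct n v hv
  have hik : i = k ∨ i = l := by
    by_contra h; push_neg at h; exact hvi.1 (hvz i h.1 h.2)
  have hjk : j = k ∨ j = l := by
    by_contra h; push_neg at h; exact hvi.2 (hvz j h.1 h.2)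
  have hvz' : ∀ m, m ≠ i → m ≠ j → v m = 0 := by
    have hcases : (i = k ∧ j = l) ∨ (i = l ∧ j = k) := by
      rcases hik with h | h <;> rcases hjk with h' | h'
      · exact absurd (h.trans h'.symm) hij
      · exact Or.inl ⟨h, h'⟩
      · exact Or.inr ⟨h, h'⟩
      · exact absurd (h.trans h'.symm) hij
    rcases hcases with ⟨rfl, rfl⟩ | ⟨rfl, rfl⟩
    · exact hvz
    · intro m h1 h2; exact hvz m h2 h1
  have e3 : v i * w i + v j * w j = 0 := by rw [← dot_eq n v w i j hij hvz']; exact hvw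
  -- key claim: w vanishes on {i, j}
  have hwij : w i = 0 ∧ w j = 0 := by
    by_contra h
    have hw' : w i ≠ 0 ∧ w j ≠ 0 := by
      rcases not_and_or.mp h with h | h
      · refine ⟨h, ?_⟩
        intro h'
        rw [h', mul_zero, add_zero] at e2
        rcases mul_eq_zero.mp e2 with h'' | h''
        · exact hui h''
        · exact h h''
      · constructor
        · intro h'
          rw [h', mul_zero, zero_add] at e2
          rcases mul_eq_zero.mp e2 with h'' | h''
          · exact huj h''
          · exact h h''
        · exact h
    have U1 : u i = 1 ∨ u i = -1 := (huval i).resolve_left hui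
    have U2 : u j = 1 ∨ u j = -1 := (huval j).resolve_left huj
    have V1 : v i = 1 ∨ v i = -1 := (hvval i).resolve_left hvi.1
    have V2 : v j = 1 ∨ v j = -1 := (hvval j).resolve_left hvi.2
    have W1 : w i = 1 ∨ w i = -1 := (hwval i).resolve_left hw'.1
    have W2 : w j = 1 ∨ w j = -1 := (hwval j).resolve_left hw'.2
    rcases U1 with h1 | h1 <;> rcases U2 with h2 | h2 <;>
    rcases V1 with h3 | h3 <;> rcases V2 with h4 | h4 <;>
    rcases W1 with h5 | h5 <;> rcases W2 with h6 | h6 <;>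
    rw [h1, h2, h3, h4] at e1 <;> rw [h1, h2, h5, h6] at e2 <;>
    rw [h3, h4, h5, h6] at e3 <;> omega
  constructor
  · rw [Set.disjoint_left]
    intro m hm hmu
    simp only [Function.mem_support] at hm hmu
    have : m = i ∨ m = j := by
      by_contra h; push_neg at h; exact hmu (huz m h.1 h.2)
    rcases this with rfl | rfl
    · exact hm hwij.1
    · exact hm hwij.2
  · rw [Set.disjoint_left]
    intro m hm hmv
    simp only [Function.mem_support] at hm hmv
    have : m = i ∨ m = j := by
      by_contra h; push_neg at h; exact hmv (hvz' m h.1 h.2)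
    rcases this with rfl | rfl
    · exact hm hwij.1
    · exact hm hwij.2
end

section
/- Let m ≥ 3 and p_1, …, p_m ≥ 1 be integers, N = 1 + Σ_{i=1}^m (p_i − 1), and let Q be the Gram matrix of the star-shaped plumbing graph with a central vertex of weight −m and, for each i, a chain of p_i − 1 vertices of weight −2 attached to the central vertex. Let φ be a lattice embedding of Q into ℤ^N. Let I = {i : the support of the φ-image of the i-th chain meets the support of the φ-image of the j-th chain for some j ≠ i} and z = #{i : p_i = 1}. If I is nonempty, then |I| is even and |I| + z ≤ m ≤ |I| + z + 1. -/
/-- The Gram matrix of a star-shaped plumbing graph: a central vertex of weight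
`w0`; for each `i : ι` a chain of `L i` vertices of weight `−2` whose last
vertex is adjacent to the central vertex; and for each `a : κ` an extra vertex
of weight `w a` adjacent to the central vertex. Diagonal entries are the
weights, entries at adjacent pairs of vertices are 1, all other entries are 0. -/
def starGram {ι κ : Type} [DecidableEq ι] [DecidableEq κ]
    (w0 : ℤ) (L : ι → ℕ) (w : κ → ℤ) :
    Matrix (Unit ⊕ ((Σ i : ι, Fin (L i)) ⊕ κ)) (Unit ⊕ ((Σ i : ι, Fin (L i)) ⊕ κ)) ℤ :=
  fun u v =>
    match u, v with
    | Sum.inl _, Sum.inl _ => w0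
    | Sum.inl _, Sum.inr (Sum.inl ⟨i, j⟩) => if (j : ℕ) + 1 = L i then 1 else 0
    | Sum.inl _, Sum.inr (Sum.inr _) => 1
    | Sum.inr (Sum.inl ⟨i, j⟩), Sum.inl _ => if (j : ℕ) + 1 = L i then 1 else 0
    | Sum.inr (Sum.inr _), Sum.inl _ => 1
    | Sum.inr (Sum.inl ⟨i, j⟩), Sum.inr (Sum.inl ⟨i', j'⟩) =>
        if i = i' then
          if (j : ℕ) = (j' : ℕ) then -2
          else if (j : ℕ) + 1 = (j' : ℕ) ∨ (j' : ℕ) + 1 = (j : ℕ) then 1 else 0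
        else 0
    | Sum.inr (Sum.inl _), Sum.inr (Sum.inr _) => 0
    | Sum.inr (Sum.inr _), Sum.inr (Sum.inl _) => 0
    | Sum.inr (Sum.inr a), Sum.inr (Sum.inr b) => if a = b then w a else 0

/-- A lattice embedding of the Gram matrix `Q` into `ℤ^N`: a ℤ-linear map
`φ : ℤ^V → ℤ^N` with `⟨φ(x), φ(y)⟩ = −xᵀQy` for all `x, y`. -/
def IsLatticeEmbedding {V : Type} [Fintype V] (Q : Matrix V V ℤ) (N : ℕ)
    (φ : (V → ℤ) →ₗ[ℤ] (Fin N → ℤ)) : Prop :=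
  ∀ x y : V → ℤ, (∑ m, φ x m * φ y m) = -(∑ a, ∑ b, x a * Q a b * y b)

/-- The support of the `φ`-image of the `i`-th chain: the union of the supports
of `φ` applied to the standard basis vectors corresponding to its vertices. -/
def chainSupport {ι κ : Type} [DecidableEq ι] [DecidableEq κ]
    {L : ι → ℕ} {N : ℕ}
    (φ : ((Unit ⊕ ((Σ i : ι, Fin (L i)) ⊕ κ)) → ℤ) →ₗ[ℤ] (Fin N → ℤ)) (i : ι) :
    Set (Fin N) :=
  ⋃ j : Fin (L i), Function.support (φ (Pi.single (Sum.inr (Sum.inl ⟨i, j⟩)) 1))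

/-!
Every chain vector has norm 2, hence is `±e_c ± e_d`. If two chains meet, two orthogonal such
vectors share a coordinate, so they have the same support `{c, d}` and agree modulo 2; a neighbour
in the first chain would pair oddly with one and evenly with the other, so the chain has length one.
A third chain meeting it would give three pairwise orthogonal vectors on `{c, d}`, which is
impossible. Hence the chains meeting another one are matched in pairs with a common two-element
support, so `|I|` is even and they occupy at least `|I|` coordinates. Every other chain of length
`ℓ ≥ 1` together with the central vector spans a rank `ℓ + 1` lattice inside the coordinates of the
chain (the `Aₗ` Cartan matrix bordered by the central vector is nondegenerate), so it occupies at
least `ℓ + 1` private coordinates. Counting coordinates against `N` leaves room for at most one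
such chain.
-/

open Finset Matrix

section NormTwo

variable {α : Type*} [Fintype α] {x y w : α → ℤ}

lemma mul_self_le_dotProduct_self (x : α → ℤ) (t : α) : x t * x t ≤ x ⬝ᵥ x :=
  single_le_sum (f := fun s => x s * x s) (fun s _ => mul_self_nonneg (x s)) (mem_univ t)

lemma mul_self_eq_one_of_dotProduct_self_eq_two (hx : x ⬝ᵥ x = 2) {t : α} (ht : x t ≠ 0) :
    x t * x t = 1 := by
  have hle := hx ▸ mul_self_le_dotProduct_self x t
  have : x t < 2 := by nlinarith
  have : -2 < x t := by nlinarith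
  obtain h | h : x t = -1 ∨ x t = 1 := by omega
  all_goals simp [h]

lemma eq_one_or_eq_neg_one_of_dotProduct_self_eq_two (hx : x ⬝ᵥ x = 2) {t : α} (ht : x t ≠ 0) :
    x t = 1 ∨ x t = -1 :=
  mul_self_eq_one_iff.mp (mul_self_eq_one_of_dotProduct_self_eq_two hx ht)

lemma card_support_eq_two (hx : x ⬝ᵥ x = 2) : #{t | x t ≠ 0} = 2 := by
  have : x ⬝ᵥ x = ∑ t with x t ≠ 0, 1 := by
    rw [sum_filter]
    refine sum_congr rfl fun t _ => ?_
    split_ifs with ht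
    · exact mul_self_eq_one_of_dotProduct_self_eq_two hx ht
    · simp_all
  exact_mod_cast (by simpa [hx] using this.symm : ((#{t | x t ≠ 0} : ℕ) : ℤ) = 2)

lemma dotProduct_modEq_two_of_support_eq (hx : x ⬝ᵥ x = 2) (hy : y ⬝ᵥ y = 2)
    (hsupp : ({t | x t ≠ 0} : Finset α) = ({t | y t ≠ 0} : Finset α)) (w : α → ℤ) :
    w ⬝ᵥ x ≡ w ⬝ᵥ y [ZMOD 2] := by
  refine Int.ModEq.symm <| (Int.modEq_iff_dvd).mpr ?_
  rw [← dotProduct_sub]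
  refine dvd_sum fun t _ => Dvd.dvd.mul_left ?_ _
  by_cases ht : x t = 0
  · have : y t = 0 := by simpa [ht] using congrArg (t ∈ ·) hsupp
    simp [ht, this]
  · have hyt : y t ≠ 0 := by simpa [ht] using congrArg (t ∈ ·) hsupp
    rcases eq_one_or_eq_neg_one_of_dotProduct_self_eq_two hx ht with h | h <;>
    rcases eq_one_or_eq_neg_one_of_dotProduct_self_eq_two hy hyt with h' | h' <;>
    simp [h, h']

variable [DecidableEq α]

lemma exists_support_eq_pair (hx : x ⬝ᵥ x = 2) {c : α} (hc : x c ≠ 0) :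
    ∃ d, d ≠ c ∧ ({t | x t ≠ 0} : Finset α) = {c, d} := by
  have hmem : c ∈ ({t | x t ≠ 0} : Finset α) := by simpa using hc
  obtain ⟨d, hd⟩ := card_eq_one.mp <| by
    rw [card_erase_of_mem hmem, card_support_eq_two hx]
  refine ⟨d, fun h => ?_, by rw [← insert_erase hmem, hd]⟩
  simpa [h] using hd.symm.subset (mem_singleton_self d)

lemma dotProduct_eq_of_support_subset_pair {c d : α} (hcd : c ≠ d)
    (hx : ({t | x t ≠ 0} : Finset α) ⊆ {c, d}) (y : α → ℤ) :
    x ⬝ᵥ y = x c * y c + x d * y d := by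
  rw [dotProduct, ← sum_pair (f := fun t => x t * y t) hcd]
  refine (sum_subset (subset_univ _) fun t _ ht => ?_).symm
  have : x t = 0 := by simpa using mt (@hx t) (by simpa using ht)
  rw [this, zero_mul]

lemma support_eq_of_dotProduct_eq_zero (hx : x ⬝ᵥ x = 2) (hy : y ⬝ᵥ y = 2) (hxy : x ⬝ᵥ y = 0)
    {c : α} (hxc : x c ≠ 0) (hyc : y c ≠ 0) :
    ({t | x t ≠ 0} : Finset α) = ({t | y t ≠ 0} : Finset α) := by
  obtain ⟨d, hdc, hsupp⟩ := exists_support_eq_pair hx hxc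
  rw [dotProduct_eq_of_support_subset_pair hdc.symm hsupp.subset] at hxy
  have hyd : y d ≠ 0 := fun h => mul_ne_zero hxc hyc (by simpa [h] using hxy)
  have hcard := (card_support_eq_two hy).trans (card_support_eq_two hx).symm
  refine eq_of_subset_of_card_le ?_ hcard.le
  rw [hsupp]
  intro t ht
  rcases mem_insert.mp ht with rfl | ht <;> simp_all

lemma mul_eq_neg_mul_of_mul_add_mul_eq_zero {R : Type*} [CommRing R] {a b p q : R}
    (hb : b * b = 1) (hp : p * p = 1) (h : a * p + b * q = 0) : a * b = -(p * q) := by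
  linear_combination (b * p) * h - a * b * hp - p * q * hb

/-- All three would have the same two-element support `{c, d}`, and orthogonality flips the sign
of `v c * v d`. -/
lemma not_pairwise_orthogonal (hx : x ⬝ᵥ x = 2) (hy : y ⬝ᵥ y = 2) (hw : w ⬝ᵥ w = 2)
    (hxy : x ⬝ᵥ y = 0) (hxw : x ⬝ᵥ w = 0) (hyw : y ⬝ᵥ w = 0) {c : α}
    (hxc : x c ≠ 0) (hyc : y c ≠ 0) (hwc : w c ≠ 0) : False := by
  obtain ⟨d, hdc, hsx⟩ := exists_support_eq_pair hx hxc
  have hsy := (support_eq_of_dotProduct_eq_zero hx hy hxy hxc hyc).symm.trans hsx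
  have hsw := (support_eq_of_dotProduct_eq_zero hx hw hxw hxc hwc).symm.trans hsx
  have sq : ∀ v : α → ℤ, v ⬝ᵥ v = 2 → ({t | v t ≠ 0} : Finset α) = {c, d} →
      v c * v c = 1 ∧ v d * v d = 1 := fun v hv hs => by
    have hvd : v d ≠ 0 := by simpa using hs.symm.subset (mem_insert_of_mem (mem_singleton_self d))
    have hvc : v c ≠ 0 := by simpa using hs.symm.subset (mem_insert_self c {d})
    exact ⟨mul_self_eq_one_of_dotProduct_self_eq_two hv hvc,
      mul_self_eq_one_of_dotProduct_self_eq_two hv hvd⟩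
  obtain ⟨hxc1, hxd1⟩ := sq x hx hsx
  obtain ⟨hyc1, hyd1⟩ := sq y hy hsy
  obtain ⟨hwc1, hwd1⟩ := sq w hw hsw
  rw [dotProduct_eq_of_support_subset_pair hdc.symm hsx.subset] at hxy hxw
  rw [dotProduct_eq_of_support_subset_pair hdc.symm hsy.subset] at hyw
  have hxy' := mul_eq_neg_mul_of_mul_add_mul_eq_zero hxd1 hyc1 hxy
  have hxw' := mul_eq_neg_mul_of_mul_add_mul_eq_zero hxd1 hwc1 hxw
  have hyw' := mul_eq_neg_mul_of_mul_add_mul_eq_zero hyd1 hwc1 hyw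
  rcases mul_eq_zero.mp (by linarith : x c * x d = 0) with h | h <;> simp [h] at hxc1 hxd1

end NormTwo

section CartanChain

variable {ℓ : ℕ}

noncomputable def zeroExtend (g : Fin ℓ → ℤ) : ℤ → ℤ :=
  Function.extend (fun j : Fin ℓ => ((j : ℕ) : ℤ)) g 0

lemma zeroExtend_coe (g : Fin ℓ → ℤ) (j : Fin ℓ) : zeroExtend g (j : ℕ) = g j :=
  (Nat.cast_injective.comp Fin.val_injective).extend_apply g 0 j

lemma zeroExtend_eq_zero (g : Fin ℓ → ℤ) {r : ℤ} (hr : r < 0 ∨ ℓ ≤ r) : zeroExtend g r = 0 :=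
  Function.extend_apply' _ _ _ fun ⟨j, hj⟩ => by
    have := j.isLt
    omega

lemma sum_ite_eq_zeroExtend (g : Fin ℓ → ℤ) (r : ℤ) :
    ∑ j : Fin ℓ, (if ((j : ℕ) : ℤ) = r then g j else 0) = zeroExtend g r := by
  by_cases hr : 0 ≤ r ∧ r < ℓ
  · obtain ⟨j, rfl⟩ : ∃ j : Fin ℓ, ((j : ℕ) : ℤ) = r := ⟨⟨r.toNat, by omega⟩, by simp; omega⟩
    rw [zeroExtend_coe]
    simp [Fin.val_inj]
  · rw [zeroExtend_eq_zero g (by omega)]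
    exact sum_eq_zero fun j _ => if_neg (by have := j.isLt; omega)

lemma sum_mul_cartanA (g : Fin ℓ → ℤ) (k : Fin ℓ) :
    ∑ j, g j * CartanMatrix.A ℓ j k
      = 2 * zeroExtend g k - zeroExtend g (k - 1) - zeroExtend g (k + 1) := by
  simp only [← sum_ite_eq_zeroExtend, mul_sum, ← sum_sub_distrib]
  refine sum_congr rfl fun j _ => ?_
  simp only [CartanMatrix.A, of_apply, Fin.ext_iff]
  split_ifs <;> omega

/-- The rows force `g j = (j + 1) * g 0`; the last row then gives `h = (n + 2) * g 0`, and
`g (last) = h * q` becomes `(n + 1) * g 0 = (n + 2) * q * g 0`, impossible for `g 0 ≠ 0`. -/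
lemma eq_zero_of_sum_mul_cartanA_eq {n : ℕ} {g : Fin (n + 1) → ℤ} {h q : ℤ} (hq : 0 ≤ q)
    (hrow : ∀ k, ∑ j, g j * CartanMatrix.A (n + 1) j k = if k = Fin.last n then h else 0)
    (hlast : g (Fin.last n) = h * q) :
    g = 0 ∧ h = 0 := by
  set G := zeroExtend g with hG
  have hG_out : ∀ r : ℤ, (r < 0 ∨ n + 1 ≤ r) → G r = 0 := fun r hr =>
    zeroExtend_eq_zero g (by push_cast; exact hr)
  have hrec : ∀ k : ℕ, k < n + 1 → 2 * G k - G (k - 1) - G (k + 1) = if k = n then h else 0 :=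
    fun k hk => by simpa [sum_mul_cartanA, Fin.ext_iff] using hrow ⟨k, hk⟩
  have hlin : ∀ k : ℕ, k < n + 1 → G k = (k + 1) * G 0 ∧ G (k - 1) = k * G 0 := by
    intro k
    induction k with
    | zero => intro _; simp [hG_out (-1) (by omega)]
    | succ k ih =>
      intro hk
      obtain ⟨h1, h2⟩ := ih (by omega)
      have := hrec k (by omega)
      rw [if_neg (by omega)] at this
      push_cast
      exact ⟨by linarith, by simpa using h1⟩
  obtain ⟨hn, hn'⟩ := hlin n (by omega)
  have hend := hrec n (by omega)
  rw [if_pos rfl, hn, hn', hG_out (n + 1) (by omega)] at hend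
  have hGn : G n = h * q := by rw [← hlast, ← zeroExtend_coe g (Fin.last n), Fin.val_last]
  rw [hn] at hGn
  have hG0 : G 0 = 0 := by
    have hfac : G 0 * ((n + 1) - (n + 2) * q) = 0 := by linear_combination hGn - q * hend
    refine (mul_eq_zero.mp hfac).resolve_right fun h0 => ?_
    rcases (show q = 0 ∨ 1 ≤ q by omega) with rfl | hq1 <;> nlinarith
  refine ⟨funext fun j => ?_, by rw [← hend, hG0]; ring⟩
  rw [← zeroExtend_coe g j, ← hG, (hlin j j.isLt).1, hG0, mul_zero, Pi.zero_apply]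

lemma linearIndependent_of_cartanA_chain {α : Type*} [Fintype α] (hℓ : 1 ≤ ℓ)
    {u : Fin ℓ → α → ℤ} {v : α → ℤ} (hu : ∀ j k, u j ⬝ᵥ u k = CartanMatrix.A ℓ j k)
    (hv : ∀ j, v ⬝ᵥ u j = if (j : ℕ) + 1 = ℓ then -1 else 0) :
    LinearIndependent ℤ (Sum.elim u fun _ : Unit => v) := by
  obtain ⟨n, rfl⟩ : ∃ n, ℓ = n + 1 := ⟨ℓ - 1, by omega⟩
  have hv' : ∀ j, v ⬝ᵥ u j = if j = Fin.last n then -1 else 0 := fun j => by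
    simp [hv, Fin.ext_iff]
  rw [Fintype.linearIndependent_iff]
  intro c hc
  have hdot : ∀ z, ∑ j, c (.inl j) * (u j ⬝ᵥ z) + c (.inr ()) * (v ⬝ᵥ z) = 0 := fun z => by
    simpa only [sum_dotProduct, Fintype.sum_sum_type, smul_dotProduct, smul_eq_mul, Sum.elim_inl,
      Sum.elim_inr, Fintype.sum_unique, add_dotProduct, zero_dotProduct] using congrArg (· ⬝ᵥ z) hc
  obtain ⟨hg, hh⟩ := eq_zero_of_sum_mul_cartanA_eq (g := fun j => c (.inl j)) (h := c (.inr ()))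
    (q := v ⬝ᵥ v) (sum_nonneg fun t _ => mul_self_nonneg (v t))
    (fun k => by
      have := hdot (u k)
      simp only [hu, hv'] at this
      split_ifs at this ⊢ <;> linarith)
    (by
      have := hdot v
      simp only [dotProduct_comm _ v, hv', mul_ite, mul_neg, mul_one, mul_zero, sum_ite_eq',
        mem_univ, if_true] at this
      linarith)
  rintro (j | ⟨⟩)
  · exact congrFun hg j
  · exact hh

lemma lt_card_of_cartanA_chain {α : Type*} [Fintype α] (hℓ : 1 ≤ ℓ)
    {u : Fin ℓ → α → ℤ} {v : α → ℤ} (hu : ∀ j k, u j ⬝ᵥ u k = CartanMatrix.A ℓ j k)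
    (hv : ∀ j, v ⬝ᵥ u j = if (j : ℕ) + 1 = ℓ then -1 else 0) : ℓ < Fintype.card α := by
  simpa [Module.finrank_fintype_fun_eq_card] using
    (linearIndependent_of_cartanA_chain hℓ hu hv).fintype_card_le_finrank

end CartanChain

section MeetingGraph

variable {ι β : Type*} [DecidableEq β]

def meetingGraph (S : ι → Finset β) : SimpleGraph ι where
  Adj i j := i ≠ j ∧ ¬Disjoint (S i) (S j)
  symm := ⟨fun _ _ h => ⟨h.1.symm, fun hd => h.2 hd.symm⟩⟩
  loopless := ⟨fun _ h => h.1 rfl⟩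

instance (S : ι → Finset β) [DecidableEq ι] : DecidableRel (meetingGraph S).Adj :=
  fun i j => inferInstanceAs (Decidable (i ≠ j ∧ ¬Disjoint (S i) (S j)))

variable {S : ι → Finset β} [Fintype ι] [DecidableEq ι]

lemma even_card_of_meetingGraph {M : Finset ι} (hM : ∀ i, i ∈ M ↔ ∃ j, (meetingGraph S).Adj i j)
    (hdeg : ∀ i j k, (meetingGraph S).Adj i j → (meetingGraph S).Adj i k → j = k) :
    Even #M := by
  convert (meetingGraph S).even_card_odd_degree_vertices using 2
  ext i
  have hle : (meetingGraph S).degree i ≤ 1 :=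
    card_le_one.mpr fun j hj k hk => hdeg i j k (by simpa using hj) (by simpa using hk)
  rw [hM, ← SimpleGraph.degree_pos_iff_exists_adj, mem_filter, and_iff_right (mem_univ i)]
  constructor
  · intro h
    rw [show (meetingGraph S).degree i = 1 by omega]
    exact odd_one
  · exact Odd.pos

lemma card_add_sum_card_le [Fintype β] {M : Finset ι}
    (hM : ∀ i, i ∈ M ↔ ∃ j, (meetingGraph S).Adj i j)
    (hdeg : ∀ i j k, (meetingGraph S).Adj i j → (meetingGraph S).Adj i k → j = k)
    (htwo : ∀ i j, (meetingGraph S).Adj i j → #(S i) = 2) :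
    #M + ∑ i ∈ Mᶜ, #(S i) ≤ Fintype.card β := by
  have hmeet : ∀ i j t, i ≠ j → t ∈ S i → t ∈ S j → i ∈ M ∧ j ∈ M := fun i j t hij hi hj =>
    have hadj : (meetingGraph S).Adj i j := ⟨hij, not_disjoint_iff.mpr ⟨t, hi, hj⟩⟩
    ⟨(hM i).mpr ⟨j, hadj⟩, (hM j).mpr ⟨i, hadj.symm⟩⟩
  have hsum : ∑ i ∈ Mᶜ, #(S i) = #(Mᶜ.biUnion S) := by
    refine (card_biUnion fun i hi j _ hij => ?_).symm
    refine disjoint_left.mpr fun t hti htj => ?_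
    exact mem_compl.mp (mem_coe.mp hi) (hmeet i j t hij hti htj).1
  have hdisj : Disjoint (M.biUnion S) (Mᶜ.biUnion S) := by
    refine disjoint_left.mpr fun t ht ht' => ?_
    obtain ⟨i, hi, hti⟩ := mem_biUnion.mp ht
    obtain ⟨j, hj, htj⟩ := mem_biUnion.mp ht'
    exact mem_compl.mp hj (hmeet i j t (by rintro rfl; exact mem_compl.mp hj hi) hti htj).2
  have hcover : #M * 2 ≤ #(M.biUnion S) * 2 := by
    refine card_mul_le_card_mul (fun i t => t ∈ S i) (fun i hi => ?_) (fun t _ => ?_)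
    · obtain ⟨j, hj⟩ := (hM i).mp hi
      rw [← htwo i j hj]
      exact card_le_card fun t ht => mem_filter.mpr ⟨mem_biUnion.mpr ⟨i, hi, ht⟩, ht⟩
    · by_contra! h
      obtain ⟨a, ha, b, hb, c, hc, hab, hac, hbc⟩ := two_lt_card.mp h
      simp only [bipartiteBelow, mem_filter] at ha hb hc
      exact hbc (hdeg a b c ⟨hab, not_disjoint_iff.mpr ⟨t, ha.2, hb.2⟩⟩
        ⟨hac, not_disjoint_iff.mpr ⟨t, ha.2, hc.2⟩⟩)
  rw [hsum]
  calc #M + #(Mᶜ.biUnion S) ≤ #(M.biUnion S) + #(Mᶜ.biUnion S) := by omega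
    _ = #(M.biUnion S ∪ Mᶜ.biUnion S) := (card_union_of_disjoint hdisj).symm
    _ ≤ Fintype.card β := card_le_univ _

end MeetingGraph

lemma card_le_card_add_card_filter_add_one {ι : Type*} [Fintype ι] [DecidableEq ι] {p c : ι → ℕ}
    (hp : ∀ i, 1 ≤ p i) {M : Finset ι} (hM : ∀ i ∈ M, p i = 2) (hc : ∀ i ∉ M, p i ≠ 1 → p i ≤ c i)
    (hsum : #M + ∑ i ∈ Mᶜ, c i ≤ 1 + ∑ i, (p i - 1)) :
    Fintype.card ι ≤ #M + #{i | p i = 1} + 1 := by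
  have hsplit : ∑ i, (p i - 1) = #M + ∑ i ∈ Mᶜ, (p i - 1) := by
    rw [← sum_add_sum_compl M, card_eq_sum_ones]
    congr 1
    exact sum_congr rfl fun i hi => by simp [hM i hi]
  have hrest : ∑ i ∈ Mᶜ, (p i - 1) + #Mᶜ ≤ ∑ i ∈ Mᶜ, c i + #{i | p i = 1} :=
    calc ∑ i ∈ Mᶜ, (p i - 1) + #Mᶜ = ∑ i ∈ Mᶜ, p i := by
          rw [card_eq_sum_ones, ← sum_add_distrib]
          exact sum_congr rfl fun i _ => Nat.sub_add_cancel (hp i)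
      _ ≤ ∑ i ∈ Mᶜ, (c i + if p i = 1 then 1 else 0) := sum_le_sum fun i hi => by
          have := hc i (mem_compl.mp hi)
          split_ifs at * <;> omega
      _ = ∑ i ∈ Mᶜ, c i + #{i ∈ Mᶜ | p i = 1} := by
          rw [sum_add_distrib, card_filter]
      _ ≤ ∑ i ∈ Mᶜ, c i + #{i | p i = 1} := by
          gcongr
          exact subset_univ _
  have hcard := card_add_card_compl M
  omega

lemma dotProduct_subtype_val {α : Type*} [Fintype α] {S : Finset α} {x : α → ℤ}
    (hx : ∀ t, x t ≠ 0 → t ∈ S) (y : α → ℤ) :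
    (fun s : S => x s) ⬝ᵥ (fun s : S => y s) = x ⬝ᵥ y := by
  rw [dotProduct, sum_coe_sort S (fun t => x t * y t)]
  exact sum_subset (subset_univ _) fun t _ ht => by rw [not_ne_iff.mp (mt (hx t) ht), zero_mul]

lemma IsLatticeEmbedding.dotProduct_single {V : Type} [Fintype V] [DecidableEq V]
    {Q : Matrix V V ℤ} {N : ℕ} {φ : (V → ℤ) →ₗ[ℤ] (Fin N → ℤ)} (hφ : IsLatticeEmbedding Q N φ)
    (a b : V) : φ (Pi.single a 1) ⬝ᵥ φ (Pi.single b 1) = -Q a b := by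
  simpa [Pi.single_apply, dotProduct] using hφ (Pi.single a 1) (Pi.single b 1)

section StarPlumbing

variable {ι κ : Type} [DecidableEq ι] [DecidableEq κ] {L : ι → ℕ} {N : ℕ}

def chainVector (φ : ((Unit ⊕ ((Σ i : ι, Fin (L i)) ⊕ κ)) → ℤ) →ₗ[ℤ] (Fin N → ℤ)) (i : ι)
    (j : Fin (L i)) : Fin N → ℤ :=
  φ (Pi.single (.inr (.inl ⟨i, j⟩)) 1)

def centerVector (φ : ((Unit ⊕ ((Σ i : ι, Fin (L i)) ⊕ κ)) → ℤ) →ₗ[ℤ] (Fin N → ℤ)) :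
    Fin N → ℤ :=
  φ (Pi.single (.inl ()) 1)

def chainFinset (φ : ((Unit ⊕ ((Σ i : ι, Fin (L i)) ⊕ κ)) → ℤ) →ₗ[ℤ] (Fin N → ℤ)) (i : ι) :
    Finset (Fin N) :=
  univ.biUnion fun j : Fin (L i) => {t | chainVector φ i j t ≠ 0}

variable {φ : ((Unit ⊕ ((Σ i : ι, Fin (L i)) ⊕ κ)) → ℤ) →ₗ[ℤ] (Fin N → ℤ)}

lemma mem_chainFinset {i : ι} {t : Fin N} :
    t ∈ chainFinset φ i ↔ ∃ j, chainVector φ i j t ≠ 0 := by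
  simp [chainFinset]

lemma coe_chainFinset (i : ι) : (chainFinset φ i : Set (Fin N)) = chainSupport φ i := by
  ext t
  simp only [mem_coe, mem_chainFinset]
  simp [chainSupport, chainVector]

lemma chainFinset_eq_of_length_eq_one {i : ι} (hL : L i = 1) :
    chainFinset φ i = ({t | chainVector φ i ⟨0, by omega⟩ t ≠ 0} : Finset (Fin N)) := by
  have hzero : ∀ j : Fin (L i), j = ⟨0, by omega⟩ := fun j => Fin.ext (by have := j.isLt; omega)
  ext t
  rw [mem_chainFinset, mem_filter]
  exact ⟨fun ⟨j, hj⟩ => ⟨mem_univ t, hzero j ▸ hj⟩, fun h => ⟨_, h.2⟩⟩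

variable [Fintype ι] [Fintype κ] {w0 : ℤ} {w : κ → ℤ}

lemma chainVector_dotProduct_chainVector
    (hφ : IsLatticeEmbedding (starGram w0 L w) N φ) (i : ι) (j k : Fin (L i)) :
    chainVector φ i j ⬝ᵥ chainVector φ i k = CartanMatrix.A (L i) j k := by
  rw [chainVector, chainVector, hφ.dotProduct_single]
  simp only [starGram, if_true, CartanMatrix.A, of_apply, Fin.ext_iff]
  split_ifs <;> rfl

lemma chainVector_dotProduct_chainVector_of_ne
    (hφ : IsLatticeEmbedding (starGram w0 L w) N φ) {i i' : ι} (h : i ≠ i') (j : Fin (L i))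
    (k : Fin (L i')) : chainVector φ i j ⬝ᵥ chainVector φ i' k = 0 := by
  rw [chainVector, chainVector, hφ.dotProduct_single]
  simp [starGram, h]

lemma chainVector_dotProduct_self
    (hφ : IsLatticeEmbedding (starGram w0 L w) N φ) (i : ι) (j : Fin (L i)) :
    chainVector φ i j ⬝ᵥ chainVector φ i j = 2 := by
  simp [chainVector_dotProduct_chainVector hφ, CartanMatrix.A]

lemma centerVector_dotProduct_chainVector
    (hφ : IsLatticeEmbedding (starGram w0 L w) N φ) (i : ι) (j : Fin (L i)) :
    centerVector φ ⬝ᵥ chainVector φ i j = if (j : ℕ) + 1 = L i then -1 else 0 := by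
  rw [centerVector, chainVector, hφ.dotProduct_single]
  simp only [starGram]
  split_ifs <;> rfl

lemma length_eq_one_of_adj (hφ : IsLatticeEmbedding (starGram w0 L w) N φ) {i j : ι}
    (h : (meetingGraph (chainFinset φ)).Adj i j) : L i = 1 := by
  obtain ⟨hij, hmeet⟩ := h
  obtain ⟨t, hti, htj⟩ := not_disjoint_iff.mp hmeet
  obtain ⟨a, ha⟩ := mem_chainFinset.mp hti
  obtain ⟨b, hb⟩ := mem_chainFinset.mp htj
  by_contra hL
  have := a.isLt
  obtain ⟨a', ha'⟩ : ∃ a' : Fin (L i), CartanMatrix.A (L i) a' a = -1 := by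
    by_cases h : (a : ℕ) + 1 < L i
    · exact ⟨⟨a + 1, h⟩, by simp [CartanMatrix.A, Fin.ext_iff]⟩
    · exact ⟨⟨a - 1, by omega⟩, by simp [CartanMatrix.A, Fin.ext_iff]; omega⟩
  have hx := chainVector_dotProduct_self hφ i a
  have hy := chainVector_dotProduct_self hφ j b
  have hpar := dotProduct_modEq_two_of_support_eq hx hy
    (support_eq_of_dotProduct_eq_zero hx hy
      (chainVector_dotProduct_chainVector_of_ne hφ hij a b) ha hb) (chainVector φ i a')
  rw [chainVector_dotProduct_chainVector hφ, ha',
    chainVector_dotProduct_chainVector_of_ne hφ hij] at hpar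
  exact absurd hpar (by decide)

lemma eq_of_adj_of_adj (hφ : IsLatticeEmbedding (starGram w0 L w) N φ) {i j k : ι}
    (hj : (meetingGraph (chainFinset φ)).Adj i j) (hk : (meetingGraph (chainFinset φ)).Adj i k) :
    j = k := by
  by_contra hjk
  have hL := length_eq_one_of_adj hφ hj
  have hsupp := chainFinset_eq_of_length_eq_one (φ := φ) hL
  obtain ⟨t, hti, htj⟩ := not_disjoint_iff.mp hj.2
  obtain ⟨t', hti', htk⟩ := not_disjoint_iff.mp hk.2
  rw [hsupp, mem_filter] at hti hti'
  obtain ⟨b, hb⟩ := mem_chainFinset.mp htj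
  obtain ⟨c, hc⟩ := mem_chainFinset.mp htk
  have hx := chainVector_dotProduct_self hφ i ⟨0, by omega⟩
  have hy := chainVector_dotProduct_self hφ j b
  have hxy := chainVector_dotProduct_chainVector_of_ne hφ hj.1 ⟨0, by omega⟩ b
  have hb' : chainVector φ j b t' ≠ 0 := by
    have := support_eq_of_dotProduct_eq_zero hx hy hxy hti.2 hb ▸ mem_filter.mpr hti'
    simpa using this
  exact not_pairwise_orthogonal hx hy (chainVector_dotProduct_self hφ k c) hxy
    (chainVector_dotProduct_chainVector_of_ne hφ hk.1 _ c)
    (chainVector_dotProduct_chainVector_of_ne hφ hjk b c) hti'.2 hb' hc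

lemma card_chainFinset_of_adj (hφ : IsLatticeEmbedding (starGram w0 L w) N φ) {i j : ι}
    (h : (meetingGraph (chainFinset φ)).Adj i j) : #(chainFinset φ i) = 2 := by
  have hL := length_eq_one_of_adj hφ h
  rw [chainFinset_eq_of_length_eq_one hL, card_support_eq_two (chainVector_dotProduct_self hφ i _)]

lemma lt_card_chainFinset (hφ : IsLatticeEmbedding (starGram w0 L w) N φ) {i : ι}
    (hL : 1 ≤ L i) : L i < #(chainFinset φ i) := by
  have hsub : ∀ j t, chainVector φ i j t ≠ 0 → t ∈ chainFinset φ i :=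
    fun j t ht => mem_chainFinset.mpr ⟨j, ht⟩
  simpa using lt_card_of_cartanA_chain (α := chainFinset φ i) hL
    (u := fun j s => chainVector φ i j s) (v := fun s => centerVector φ s)
    (fun j k => by rw [dotProduct_subtype_val (hsub j), chainVector_dotProduct_chainVector hφ])
    (fun j => by
      rw [dotProduct_comm, dotProduct_subtype_val (hsub j), dotProduct_comm,
        centerVector_dotProduct_chainVector hφ])

end StarPlumbing

theorem stmt_13_general (m : ℕ) (p : Fin m → ℕ) (hp : ∀ i, 1 ≤ p i)
    (N : ℕ) (hN : N = 1 + ∑ i, (p i - 1))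
    (φ : ((Unit ⊕ ((Σ i : Fin m, Fin (p i - 1)) ⊕ Empty)) → ℤ) →ₗ[ℤ] (Fin N → ℤ))
    (hφ : IsLatticeEmbedding
      (starGram (-(m : ℤ)) (fun i => p i - 1) (fun e : Empty => e.elim)) N φ)
    (I : Set (Fin m))
    (hI : I = {i : Fin m | ∃ j, j ≠ i ∧ ((chainSupport φ i) ∩ (chainSupport φ j)).Nonempty})
    (z : ℕ) (hz : z = (Finset.univ.filter fun i => p i = 1).card) :
    Even I.ncard ∧ I.ncard + z ≤ m ∧ m ≤ I.ncard + z + 1 := by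
  set G := meetingGraph (chainFinset φ)
  set M : Finset (Fin m) := {i | ∃ j, G.Adj i j}
  have hM : ∀ i, i ∈ M ↔ ∃ j, G.Adj i j := by simp [M]
  have hIM : I = M := by
    ext i
    simp [hI, M, G, meetingGraph, ← coe_chainFinset, not_disjoint_iff_nonempty_inter,
      ← coe_inter, eq_comm]
  have hdeg : ∀ i j k, G.Adj i j → G.Adj i k → j = k := fun _ _ _ => eq_of_adj_of_adj hφ
  have hM2 : ∀ i ∈ M, p i = 2 := fun i hi => by
    obtain ⟨j, h⟩ := (hM i).mp hi
    have := length_eq_one_of_adj hφ h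
    omega
  rw [hIM, Set.ncard_coe_finset, hz]
  refine ⟨even_card_of_meetingGraph hM hdeg, ?_, ?_⟩
  · have hdisj : Disjoint M ({i | p i = 1} : Finset (Fin m)) :=
      disjoint_left.mpr fun i hi hi1 => by simp [hM2 i hi] at hi1
    simpa using (card_union_of_disjoint hdisj).symm.le.trans (card_le_univ _)
  · have hcount := (card_add_sum_card_le hM hdeg fun i j h => card_chainFinset_of_adj hφ h).trans_eq
      ((Fintype.card_fin N).trans hN)
    simpa using card_le_card_add_card_filter_add_one hp hM2
      (fun i _ h => Nat.le_of_pred_lt (lt_card_chainFinset hφ (by have := hp i; omega))) hcount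

/-- For a lattice embedding of the plumbing `X(p_1, …, p_m)` of a positive
pretzel link, if the set `I` of chains whose support meets the support of some
other chain is nonempty, then `|I|` is even and `|I| + z ≤ m ≤ |I| + z + 1`,
where `z` is the number of parameters equal to 1. -/
theorem stmt_13 (m : ℕ) (hm : 3 ≤ m) (p : Fin m → ℕ) (hp : ∀ i, 1 ≤ p i)
    (N : ℕ) (hN : N = 1 + ∑ i, (p i - 1))
    (φ : ((Unit ⊕ ((Σ i : Fin m, Fin (p i - 1)) ⊕ Empty)) → ℤ) →ₗ[ℤ] (Fin N → ℤ))
    (hφ : IsLatticeEmbedding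
      (starGram (-(m : ℤ)) (fun i => p i - 1) (fun e : Empty => e.elim)) N φ)
    (I : Set (Fin m))
    (hI : I = {i : Fin m | ∃ j, j ≠ i ∧ ((chainSupport φ i) ∩ (chainSupport φ j)).Nonempty})
    (z : ℕ) (hz : z = (Finset.univ.filter fun i => p i = 1).card)
    (hne : I.Nonempty) :
    Even I.ncard ∧ I.ncard + z ≤ m ∧ m ≤ I.ncard + z + 1 :=
  stmt_13_general m p hp N hN φ hφ I hI z hz
end
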